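/- arXiv:math/9907123 — 5 statements merged into one kernel-verified Lean document; each statement's English description precedes it below -/
import Mathlib

section
/- Let w > 0 and let l ≥ 0 be an integer. Then C'_q(l) = sinh(lw)·sinh((l+1)w)/sinh²(w) ≥ 0, and the equation α(α−1) = C'_q(l) has exactly one strictly positive root, namely α = 1/2 + √(4 sinh(lw) sinh((l+1)w) + sinh²(w))/(2 sinh(w)). Consequently the energy eigenvalues are E' = 2n + 1 + √(4 sinh(lw) sinh((l+1)w) + sinh²(w))/(2 sinh(w)); in particular, for l = 0 one has E' = 2n + 3/2, independent of w. -/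
open Real

theorem levels_Cq_prime_real_q (w : ℝ) (hw : 0 < w) (l : ℕ) :
    0 ≤ Real.sinh ((l : ℝ) * w) * Real.sinh (((l : ℝ) + 1) * w) / Real.sinh w ^ 2 ∧
    (∃! α : ℝ, 0 < α ∧
        α * (α - 1) = Real.sinh ((l : ℝ) * w) * Real.sinh (((l : ℝ) + 1) * w) / Real.sinh w ^ 2) ∧
    (0 < 1/2 + Real.sqrt (4 * Real.sinh ((l : ℝ) * w) * Real.sinh (((l : ℝ) + 1) * w)
            + Real.sinh w ^ 2) / (2 * Real.sinh w) ∧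
      (1/2 + Real.sqrt (4 * Real.sinh ((l : ℝ) * w) * Real.sinh (((l : ℝ) + 1) * w)
            + Real.sinh w ^ 2) / (2 * Real.sinh w)) *
        (1/2 + Real.sqrt (4 * Real.sinh ((l : ℝ) * w) * Real.sinh (((l : ℝ) + 1) * w)
            + Real.sinh w ^ 2) / (2 * Real.sinh w) - 1)
        = Real.sinh ((l : ℝ) * w) * Real.sinh (((l : ℝ) + 1) * w) / Real.sinh w ^ 2) ∧
    (∀ n : ℕ,
      2 * (n : ℝ) + (1/2 + Real.sqrt (4 * Real.sinh ((l : ℝ) * w) * Real.sinh (((l : ℝ) + 1) * w)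
            + Real.sinh w ^ 2) / (2 * Real.sinh w)) + 1/2
        = 2 * (n : ℝ) + 1 + Real.sqrt (4 * Real.sinh ((l : ℝ) * w) * Real.sinh (((l : ℝ) + 1) * w)
            + Real.sinh w ^ 2) / (2 * Real.sinh w)) ∧
    (l = 0 → ∀ n : ℕ,
      2 * (n : ℝ) + (1/2 + Real.sqrt (4 * Real.sinh ((l : ℝ) * w) * Real.sinh (((l : ℝ) + 1) * w)
            + Real.sinh w ^ 2) / (2 * Real.sinh w)) + 1/2
        = 2 * (n : ℝ) + 3/2) := by
  set a := Real.sinh ((l : ℝ) * w) with ha_def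
  set b := Real.sinh (((l : ℝ) + 1) * w) with hb_def
  set s := Real.sinh w with hs_def
  have hs : 0 < s := Real.sinh_pos_iff.mpr hw
  have ha : 0 ≤ a := Real.sinh_nonneg_iff.mpr (by positivity)
  have hb : 0 ≤ b := Real.sinh_nonneg_iff.mpr (by positivity)
  have hab : 0 ≤ a * b := mul_nonneg ha hb
  have hC : 0 ≤ a * b / s ^ 2 := by positivity
  set C := a * b / s ^ 2 with hC_def
  -- key: sqrt(4ab+s²)/(2s) = sqrt(C + 1/4)
  have key : Real.sqrt (4 * a * b + s ^ 2) / (2 * s) = Real.sqrt (C + 1/4) := by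
    have h1 : 4 * a * b + s ^ 2 = (C + 1/4) * (2 * s) ^ 2 := by
      field_simp [hC_def]
      have hss : s ^ 2 * s⁻¹ ^ 2 = 1 := by rw [← mul_pow, mul_inv_cancel₀ hs.ne', one_pow]
      linear_combination (-16 * a * b) * hss
    rw [h1, Real.sqrt_mul (by positivity), Real.sqrt_sq (by positivity)]
    field_simp
  set r := Real.sqrt (C + 1/4) with hr_def
  have hr2 : r ^ 2 = C + 1/4 := Real.sq_sqrt (by linarith)
  have hr_half : (1:ℝ)/2 ≤ r := by
    rw [hr_def]
    rw [show (1:ℝ)/2 = Real.sqrt (1/4) by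
      rw [show (1:ℝ)/4 = (1/2)^2 by norm_num, Real.sqrt_sq (by norm_num)]]
    exact Real.sqrt_le_sqrt (by linarith)
  have hroot : (1/2 + r) * (1/2 + r - 1) = C := by nlinarith [hr2]
  have hpos : 0 < 1/2 + r := by linarith
  refine ⟨hC, ?_, ?_, ?_, ?_⟩
  · refine ⟨1/2 + r, ⟨hpos, hroot⟩, ?_⟩
    rintro β ⟨hβpos, hβeq⟩
    have h2 : (β - 1/2) ^ 2 = r ^ 2 := by nlinarith
    have habs : β - 1/2 = r ∨ β - 1/2 = -r := by have := (sq_eq_sq_iff_abs_eq_abs (β - 1/2) r).mp h2; rcases abs_eq_abs.mp this with h|h; exacts [Or.inl h, Or.inr h]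
    rcases habs with h | h
    · linarith
    · linarith
  · rw [key]; exact ⟨hpos, hroot⟩
  · intro n; rw [key]; ring
  · intro hl n
    subst hl
    have : a = 0 := by rw [ha_def]; push_cast; simp
    rw [this]
    rw [show 4 * (0:ℝ) * b + s ^ 2 = s^2 by ring, Real.sqrt_sq hs.le]
    field_simp
    ring
end

section
/- Let 0 < w < π. The equation α(α−1) = sin²(3w/2)/sin²(w) − 1/4 has two strictly positive roots, namely α = 1/2 ± |4 cos²(w/2) − 1|/(2 cos(w/2)), if and only if (−7−√17)/16 < cos(w) < (−7+√17)/16; otherwise it has exactly one strictly positive root α = 1/2 + |4 cos²(w/2) − 1|/(2 cos(w/2)). Equivalently, writing x = cos(w), the two-root condition holds if and only if 8x² + 7x + 1 < 0. -/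
set_option maxHeartbeats 1000000


open Real

theorem l_eq_one_levels_Cq_complex_q (w : ℝ) (hw0 : 0 < w) (hwpi : w < Real.pi) :
    (∀ α : ℝ,
      α * (α - 1) = Real.sin (3 * w / 2) ^ 2 / Real.sin w ^ 2 - 1/4 ↔
        (α = 1/2 + |4 * Real.cos (w/2) ^ 2 - 1| / (2 * Real.cos (w/2)) ∨
         α = 1/2 - |4 * Real.cos (w/2) ^ 2 - 1| / (2 * Real.cos (w/2)))) ∧
    ((0 < 1/2 + |4 * Real.cos (w/2) ^ 2 - 1| / (2 * Real.cos (w/2)) ∧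
      0 < 1/2 - |4 * Real.cos (w/2) ^ 2 - 1| / (2 * Real.cos (w/2))) ↔
        ((-7 - Real.sqrt 17) / 16 < Real.cos w ∧ Real.cos w < (-7 + Real.sqrt 17) / 16)) ∧
    (¬ ((-7 - Real.sqrt 17) / 16 < Real.cos w ∧ Real.cos w < (-7 + Real.sqrt 17) / 16) →
      (0 < 1/2 + |4 * Real.cos (w/2) ^ 2 - 1| / (2 * Real.cos (w/2)) ∧
       ¬ 0 < 1/2 - |4 * Real.cos (w/2) ^ 2 - 1| / (2 * Real.cos (w/2)))) ∧
    (((-7 - Real.sqrt 17) / 16 < Real.cos w ∧ Real.cos w < (-7 + Real.sqrt 17) / 16) ↔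
      8 * Real.cos w ^ 2 + 7 * Real.cos w + 1 < 0) := by
  set c := Real.cos (w/2) with hcdef
  set s := Real.sin (w/2) with hsdef
  have hc : 0 < c := Real.cos_pos_of_mem_Ioo ⟨by linarith [Real.pi_pos], by linarith⟩
  have hs : 0 < s := Real.sin_pos_of_pos_of_lt_pi (by linarith) (by linarith [Real.pi_pos])
  have hcosw : Real.cos w = 2 * c ^ 2 - 1 := by
    have := Real.cos_two_mul (w/2)
    rw [show 2 * (w/2) = w by ring] at this
    rw [this]
  have hsinw : Real.sin w = 2 * s * c := by
    have := Real.sin_two_mul (w/2)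
    rw [show 2 * (w/2) = w by ring] at this
    rw [this]
  have hsin3 : Real.sin (3 * w / 2) = s * (4 * c ^ 2 - 1) := by
    have h1 : (3 : ℝ) * w / 2 = w / 2 + w := by ring
    rw [h1, Real.sin_add, hcosw, hsinw, ← hcdef, ← hsdef]; ring
  set A := |4 * c ^ 2 - 1| / (2 * c) with hAdef
  have hAnn : 0 ≤ A := div_nonneg (abs_nonneg _) (by linarith)
  have hA2 : A ^ 2 = (4 * c ^ 2 - 1) ^ 2 / (4 * c ^ 2) := by
    rw [hAdef, div_pow, sq_abs]; ring_nf
  have hE : Real.sin (3 * w / 2) ^ 2 / Real.sin w ^ 2 = A ^ 2 := by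
    rw [hsin3, hsinw, hA2]
    field_simp
    ring
  set x := Real.cos w with hxdef
  have hP4 : ((-7 - Real.sqrt 17) / 16 < x ∧ x < (-7 + Real.sqrt 17) / 16) ↔
      8 * x ^ 2 + 7 * x + 1 < 0 := by
    have h17 : Real.sqrt 17 ^ 2 = 17 := Real.sq_sqrt (by norm_num)
    have h17n : 0 ≤ Real.sqrt 17 := Real.sqrt_nonneg 17
    constructor
    · rintro ⟨h1, h2⟩
      nlinarith [sq_nonneg (16 * x + 7)]
    · intro h
      constructor
      · nlinarith [sq_nonneg (16 * x + 7 + Real.sqrt 17)]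
      · nlinarith [sq_nonneg (16 * x + 7 - Real.sqrt 17)]
  have hkey : (0 < 1/2 - A) ↔ 8 * x ^ 2 + 7 * x + 1 < 0 := by
    have habs : A < 1/2 ↔ |4 * c ^ 2 - 1| < c := by
      rw [hAdef, div_lt_iff₀ (by linarith : (0:ℝ) < 2 * c)]
      constructor <;> intro h <;> linarith
    constructor
    · intro h
      have h2 := habs.mp (by linarith)
      rw [abs_lt] at h2
      have hx : x = 2 * c ^ 2 - 1 := hcosw
      nlinarith [h2.1, h2.2]
    · intro h
      have hx : x = 2 * c ^ 2 - 1 := hcosw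
      have h2 : |4 * c ^ 2 - 1| < c := by
        rw [abs_lt]
        constructor <;> nlinarith
      have := habs.mpr h2
      linarith
  refine ⟨?_, ?_, ?_, hP4⟩
  · intro α
    constructor
    · intro h
      rw [hE] at h
      have h0 : (α - (1/2 + A)) * (α - (1/2 - A)) = 0 := by linear_combination h
      rcases mul_eq_zero.mp h0 with h1 | h1
      · left; linarith
      · right; linarith
    · rintro (rfl | rfl) <;> rw [hE] <;> ring
  · constructor
    · rintro ⟨_, h2⟩
      exact hP4.mpr (hkey.mp h2)
    · intro h
      exact ⟨by linarith, hkey.mpr (hP4.mp h)⟩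
  · intro hnot
    refine ⟨by linarith, ?_⟩
    intro h
    exact hnot (hP4.mpr (hkey.mp h))
end

section
/- Define f : (0, ∞) → ℝ by f(w) = (2 cosh²(w) + 1)/sinh²(w) − 3 cosh(w)/(w sinh(w)). Then f(w) → 0 as w → 0⁺, f(w) > 0 for every w > 0, and f is strictly increasing on (0, ∞). -/
open Real Filter

private lemma aux_nonneg {F F' : ℝ → ℝ} (hd : ∀ x, HasDerivAt F (F' x) x)
    (h0 : F 0 = 0) (hp : ∀ x, 0 < x → 0 ≤ F' x) :
    ∀ x, 0 ≤ x → 0 ≤ F x := by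
  intro x hx
  have hdiff : Differentiable ℝ F := fun y => (hd y).differentiableAt
  have hmono : MonotoneOn F (Set.Ici 0) := by
    apply monotoneOn_of_deriv_nonneg (convex_Ici 0) hdiff.continuous.continuousOn
      hdiff.differentiableOn
    intro y hy
    rw [interior_Ici] at hy
    rw [(hd y).deriv]
    exact hp y hy
  calc (0:ℝ) = F 0 := h0.symm
  _ ≤ F x := hmono Set.self_mem_Ici hx hx

private lemma aux_pos {F F' : ℝ → ℝ} (hd : ∀ x, HasDerivAt F (F' x) x)
    (h0 : F 0 = 0) (hp : ∀ x, 0 < x → 0 < F' x) :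
    ∀ x, 0 < x → 0 < F x := by
  intro x hx
  have hdiff : Differentiable ℝ F := fun y => (hd y).differentiableAt
  have hmono : StrictMonoOn F (Set.Ici 0) := by
    apply strictMonoOn_of_deriv_pos (convex_Ici 0) hdiff.continuous.continuousOn
    intro y hy
    rw [interior_Ici] at hy
    rw [(hd y).deriv]
    exact hp y hy
  calc (0:ℝ) = F 0 := h0.symm
  _ < F x := hmono Set.self_mem_Ici (le_of_lt hx) hx

private lemma aux_nonneg01 {F F' : ℝ → ℝ} (hd : ∀ x, HasDerivAt F (F' x) x)
    (h0 : F 0 = 0) (hp : ∀ x, x ∈ Set.Ioo (0:ℝ) 1 → 0 ≤ F' x) :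
    ∀ x ∈ Set.Icc (0:ℝ) 1, 0 ≤ F x := by
  intro x hx
  have hdiff : Differentiable ℝ F := fun y => (hd y).differentiableAt
  have hmono : MonotoneOn F (Set.Icc 0 1) := by
    apply monotoneOn_of_deriv_nonneg (convex_Icc 0 1) hdiff.continuous.continuousOn
      hdiff.differentiableOn
    intro y hy
    rw [interior_Icc] at hy
    rw [(hd y).deriv]
    exact hp y hy
  calc (0:ℝ) = F 0 := h0.symm
  _ ≤ F x := hmono (Set.left_mem_Icc.mpr one_pos.le) hx hx.1

private lemma sinh_le_mul_cosh : ∀ x : ℝ, 0 ≤ x → Real.sinh x ≤ x * Real.cosh x := by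
  have h := aux_nonneg (F := fun x => x * Real.cosh x - Real.sinh x)
    (F' := fun x => x * Real.sinh x)
    (fun x => by
      have H := ((hasDerivAt_id x).mul (Real.hasDerivAt_cosh x)).sub (Real.hasDerivAt_sinh x)
      refine H.congr_deriv (Eq.symm ?_); simp only [id_eq]; ring)
    (by simp)
    (fun x hx => mul_nonneg hx.le (Real.sinh_pos_iff.mpr hx).le)
  intro x hx
  have := h x hx
  linarith

private lemma cosh_le_two : ∀ x ∈ Set.Icc (0:ℝ) 1, Real.cosh x ≤ 2 := by
  intro x hx
  rw [Real.cosh_eq]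
  have h1 : Real.exp x ≤ Real.exp 1 := Real.exp_le_exp.mpr hx.2
  have h2 : Real.exp (-x) ≤ Real.exp 0 := Real.exp_le_exp.mpr (by linarith [hx.1])
  have h3 : Real.exp 1 < 2.7182818286 := Real.exp_one_lt_d9
  rw [Real.exp_zero] at h2
  norm_num at h3 ⊢
  linarith

private lemma mul_cosh_sub_sinh_le : ∀ x ∈ Set.Icc (0:ℝ) 1,
    x * Real.cosh x - Real.sinh x ≤ x ^ 3 := by
  have h := aux_nonneg01 (F := fun x => x ^ 3 - (x * Real.cosh x - Real.sinh x))
    (F' := fun x => 3 * x ^ 2 - x * Real.sinh x)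
    (fun x => by
      have H := (hasDerivAt_pow 3 x).sub
        (((hasDerivAt_id x).mul (Real.hasDerivAt_cosh x)).sub (Real.hasDerivAt_sinh x))
      refine H.congr_deriv (Eq.symm ?_); simp only [id_eq]; push_cast; ring)
    (by simp)
    (fun y hy => by
      have hA := sinh_le_mul_cosh y hy.1.le
      have hC := cosh_le_two y ⟨hy.1.le, hy.2.le⟩
      have hy0 := hy.1
      nlinarith [mul_le_mul_of_nonneg_left hA hy0.le,
        mul_le_mul_of_nonneg_left hC (mul_nonneg hy0.le hy0.le), sq_nonneg y])
  intro x hx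
  have := h x hx
  linarith

private lemma h_hasDeriv : ∀ x : ℝ,
    HasDerivAt (fun x => x * (2 * Real.cosh x ^ 2 + 1) - 3 * Real.cosh x * Real.sinh x)
      (4 * Real.sinh x * (x * Real.cosh x - Real.sinh x)) x := by
  intro x
  have hc := Real.hasDerivAt_cosh x
  have hs := Real.hasDerivAt_sinh x
  have H := ((hasDerivAt_id x).mul (((hc.pow 2).const_mul 2).add_const 1)).sub
    ((hc.const_mul 3).mul hs)
  refine H.congr_deriv (Eq.symm ?_)
  simp only [id_eq, Pi.pow_apply, Pi.mul_apply]
  linear_combination Real.cosh_sq x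

private lemma h_nonneg : ∀ x : ℝ, 0 ≤ x →
    0 ≤ x * (2 * Real.cosh x ^ 2 + 1) - 3 * Real.cosh x * Real.sinh x := by
  have h := aux_nonneg h_hasDeriv (by simp)
    (fun x hx => by
      have hA := sinh_le_mul_cosh x hx.le
      have hs := (Real.sinh_pos_iff.mpr hx).le
      nlinarith)
  intro x hx
  exact h x hx

private lemma h_le : ∀ x ∈ Set.Icc (0:ℝ) 1,
    x * (2 * Real.cosh x ^ 2 + 1) - 3 * Real.cosh x * Real.sinh x ≤ 2 * x ^ 5 := by
  have h := aux_nonneg01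
    (F := fun x => 2 * x ^ 5 - (x * (2 * Real.cosh x ^ 2 + 1) - 3 * Real.cosh x * Real.sinh x))
    (F' := fun x => 10 * x ^ 4 - 4 * Real.sinh x * (x * Real.cosh x - Real.sinh x))
    (fun x => by
      have H := ((hasDerivAt_pow 5 x).const_mul 2).sub (h_hasDeriv x)
      refine H.congr_deriv (Eq.symm ?_); push_cast; ring)
    (by norm_num)
    (fun y hy => by
      have hA := sinh_le_mul_cosh y hy.1.le
      have hC := cosh_le_two y ⟨hy.1.le, hy.2.le⟩
      have hD := mul_cosh_sub_sinh_le y ⟨hy.1.le, hy.2.le⟩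
      have hs := (Real.sinh_pos_iff.mpr hy.1).le
      have hy0 := hy.1
      have t1 : Real.sinh y ≤ 2 * y := by nlinarith
      have t2 : 0 ≤ y * Real.cosh y - Real.sinh y := by linarith
      have t3 : Real.sinh y * (y * Real.cosh y - Real.sinh y) ≤ (2 * y) * y ^ 3 :=
        mul_le_mul t1 hD t2 (by linarith)
      nlinarith [pow_nonneg hy.1.le 4])
  intro x hx
  have := h x hx
  linarith

/- The derivative chain for g(w) = cosh w * sinh w ^ 2 + w * sinh w - 2 w^2 cosh w. -/

private lemma g0_hasDeriv : ∀ x : ℝ,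
    HasDerivAt (fun x => Real.cosh x * Real.sinh x ^ 2 + x * Real.sinh x - 2 * x ^ 2 * Real.cosh x)
      (3 * Real.sinh x * Real.cosh x ^ 2 - 3 * x * Real.cosh x - 2 * x ^ 2 * Real.sinh x) x := by
  intro x
  have hc := Real.hasDerivAt_cosh x
  have hs := Real.hasDerivAt_sinh x
  have H := ((hc.mul (hs.pow 2)).add ((hasDerivAt_id x).mul hs)).sub
    (((hasDerivAt_pow 2 x).const_mul 2).mul hc)
  refine H.congr_deriv (Eq.symm ?_)
  simp only [id_eq, Pi.pow_apply, Pi.mul_apply]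
  linear_combination Real.sinh x * Real.cosh_sq x

private lemma g1_hasDeriv : ∀ x : ℝ,
    HasDerivAt (fun x => 3 * Real.sinh x * Real.cosh x ^ 2 - 3 * x * Real.cosh x - 2 * x ^ 2 * Real.sinh x)
      (9 * Real.sinh x ^ 2 * Real.cosh x - 7 * x * Real.sinh x - 2 * x ^ 2 * Real.cosh x) x := by
  intro x
  have hc := Real.hasDerivAt_cosh x
  have hs := Real.hasDerivAt_sinh x
  have H := (((hs.const_mul 3).mul (hc.pow 2)).sub (((hasDerivAt_id x).const_mul 3).mul hc)).sub
    (((hasDerivAt_pow 2 x).const_mul 2).mul hs)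
  refine H.congr_deriv (Eq.symm ?_)
  simp only [id_eq, Pi.pow_apply, Pi.mul_apply]
  linear_combination (-3 * Real.cosh x) * Real.cosh_sq x

private lemma g2_hasDeriv : ∀ x : ℝ,
    HasDerivAt (fun x => 9 * Real.sinh x ^ 2 * Real.cosh x - 7 * x * Real.sinh x - 2 * x ^ 2 * Real.cosh x)
      (27 * Real.sinh x * Real.cosh x ^ 2 - 16 * Real.sinh x - 11 * x * Real.cosh x - 2 * x ^ 2 * Real.sinh x) x := by
  intro x
  have hc := Real.hasDerivAt_cosh x
  have hs := Real.hasDerivAt_sinh x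
  have H := ((((hs.pow 2).const_mul 9).mul hc).sub (((hasDerivAt_id x).const_mul 7).mul hs)).sub
    (((hasDerivAt_pow 2 x).const_mul 2).mul hc)
  refine H.congr_deriv (Eq.symm ?_)
  simp only [id_eq, Pi.pow_apply, Pi.mul_apply]
  linear_combination (9 * Real.sinh x) * Real.cosh_sq x

private lemma g3_hasDeriv : ∀ x : ℝ,
    HasDerivAt (fun x => 27 * Real.sinh x * Real.cosh x ^ 2 - 16 * Real.sinh x - 11 * x * Real.cosh x - 2 * x ^ 2 * Real.sinh x)
      (81 * Real.sinh x ^ 2 * Real.cosh x - 15 * x * Real.sinh x - 2 * x ^ 2 * Real.cosh x) x := by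
  intro x
  have hc := Real.hasDerivAt_cosh x
  have hs := Real.hasDerivAt_sinh x
  have H := ((((hs.const_mul 27).mul (hc.pow 2)).sub (hs.const_mul 16)).sub
    (((hasDerivAt_id x).const_mul 11).mul hc)).sub (((hasDerivAt_pow 2 x).const_mul 2).mul hs)
  refine H.congr_deriv (Eq.symm ?_)
  simp only [id_eq, Pi.pow_apply, Pi.mul_apply]
  linear_combination (-27 * Real.cosh x) * Real.cosh_sq x

private lemma g4_hasDeriv : ∀ x : ℝ,
    HasDerivAt (fun x => 81 * Real.sinh x ^ 2 * Real.cosh x - 15 * x * Real.sinh x - 2 * x ^ 2 * Real.cosh x)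
      (243 * Real.sinh x * Real.cosh x ^ 2 - 96 * Real.sinh x - 19 * x * Real.cosh x - 2 * x ^ 2 * Real.sinh x) x := by
  intro x
  have hc := Real.hasDerivAt_cosh x
  have hs := Real.hasDerivAt_sinh x
  have H := ((((hs.pow 2).const_mul 81).mul hc).sub (((hasDerivAt_id x).const_mul 15).mul hs)).sub
    (((hasDerivAt_pow 2 x).const_mul 2).mul hc)
  refine H.congr_deriv (Eq.symm ?_)
  simp only [id_eq, Pi.pow_apply, Pi.mul_apply]
  linear_combination (81 * Real.sinh x) * Real.cosh_sq x

private lemma g5_hasDeriv : ∀ x : ℝ,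
    HasDerivAt (fun x => 243 * Real.sinh x * Real.cosh x ^ 2 - 96 * Real.sinh x - 19 * x * Real.cosh x - 2 * x ^ 2 * Real.sinh x)
      (729 * Real.sinh x ^ 2 * Real.cosh x + 128 * Real.cosh x - 23 * x * Real.sinh x - 2 * x ^ 2 * Real.cosh x) x := by
  intro x
  have hc := Real.hasDerivAt_cosh x
  have hs := Real.hasDerivAt_sinh x
  have H := ((((hs.const_mul 243).mul (hc.pow 2)).sub (hs.const_mul 96)).sub
    (((hasDerivAt_id x).const_mul 19).mul hc)).sub (((hasDerivAt_pow 2 x).const_mul 2).mul hs)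
  refine H.congr_deriv (Eq.symm ?_)
  simp only [id_eq, Pi.pow_apply, Pi.mul_apply]
  linear_combination (-243 * Real.cosh x) * Real.cosh_sq x

private lemma g6_pos : ∀ x : ℝ, 0 < x →
    0 < 729 * Real.sinh x ^ 2 * Real.cosh x + 128 * Real.cosh x - 23 * x * Real.sinh x - 2 * x ^ 2 * Real.cosh x := by
  intro x hx
  have hA := sinh_le_mul_cosh x hx.le
  have hB : x ≤ Real.sinh x := Real.self_le_sinh_iff.mpr hx.le
  have hc := Real.cosh_pos (x := x)
  have hc1 := Real.one_le_cosh x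
  nlinarith [mul_le_mul_of_nonneg_left hA (by positivity : (0:ℝ) ≤ 23 * x),
    mul_le_mul_of_nonneg_right (mul_self_le_mul_self hx.le hB) hc.le]

private lemma g5_pos : ∀ x : ℝ, 0 < x →
    0 < 243 * Real.sinh x * Real.cosh x ^ 2 - 96 * Real.sinh x - 19 * x * Real.cosh x - 2 * x ^ 2 * Real.sinh x :=
  aux_pos g5_hasDeriv (by simp) g6_pos

private lemma g4_pos : ∀ x : ℝ, 0 < x →
    0 < 81 * Real.sinh x ^ 2 * Real.cosh x - 15 * x * Real.sinh x - 2 * x ^ 2 * Real.cosh x :=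
  aux_pos g4_hasDeriv (by simp) g5_pos

private lemma g3_pos : ∀ x : ℝ, 0 < x →
    0 < 27 * Real.sinh x * Real.cosh x ^ 2 - 16 * Real.sinh x - 11 * x * Real.cosh x - 2 * x ^ 2 * Real.sinh x :=
  aux_pos g3_hasDeriv (by simp) g4_pos

private lemma g2_pos : ∀ x : ℝ, 0 < x →
    0 < 9 * Real.sinh x ^ 2 * Real.cosh x - 7 * x * Real.sinh x - 2 * x ^ 2 * Real.cosh x :=
  aux_pos g2_hasDeriv (by simp) g3_pos

private lemma g1_pos : ∀ x : ℝ, 0 < x →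
    0 < 3 * Real.sinh x * Real.cosh x ^ 2 - 3 * x * Real.cosh x - 2 * x ^ 2 * Real.sinh x :=
  aux_pos g1_hasDeriv (by simp) g2_pos

private lemma g0_pos : ∀ x : ℝ, 0 < x →
    0 < Real.cosh x * Real.sinh x ^ 2 + x * Real.sinh x - 2 * x ^ 2 * Real.cosh x :=
  aux_pos g0_hasDeriv (by simp) g1_pos

private lemma f_hasDeriv (w : ℝ) (hw : 0 < w) :
    HasDerivAt (fun w : ℝ => (2 * Real.cosh w ^ 2 + 1) / Real.sinh w ^ 2
      - 3 * Real.cosh w / (w * Real.sinh w))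
      (3 * (Real.cosh w * Real.sinh w ^ 2 + w * Real.sinh w - 2 * w ^ 2 * Real.cosh w)
        / (w ^ 2 * Real.sinh w ^ 3)) w := by
  have hc := Real.hasDerivAt_cosh w
  have hs := Real.hasDerivAt_sinh w
  have hs0 : Real.sinh w ≠ 0 := ne_of_gt (Real.sinh_pos_iff.mpr hw)
  have hw0 : w ≠ 0 := ne_of_gt hw
  have d1 := ((((hc.pow 2).const_mul 2).add_const 1)).div (hs.pow 2) (pow_ne_zero 2 hs0)
  have d2 := (hc.const_mul 3).div ((hasDerivAt_id w).mul hs) (mul_ne_zero hw0 hs0)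
  have H := d1.sub d2
  refine H.congr_deriv (Eq.symm ?_)
  simp only [id_eq, Pi.pow_apply, Pi.mul_apply]
  field_simp
  ring_nf
  linear_combination (Real.sinh w * w * (4 * Real.cosh w * w - 3 * Real.sinh w)) * Real.cosh_sq w

private lemma f_eq (w : ℝ) (hw : 0 < w) :
    (2 * Real.cosh w ^ 2 + 1) / Real.sinh w ^ 2 - 3 * Real.cosh w / (w * Real.sinh w)
      = (w * (2 * Real.cosh w ^ 2 + 1) - 3 * Real.cosh w * Real.sinh w) / (w * Real.sinh w ^ 2) := by
  have hs0 : Real.sinh w ≠ 0 := ne_of_gt (Real.sinh_pos_iff.mpr hw)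
  have hw0 : w ≠ 0 := ne_of_gt hw
  field_simp

theorem quadrupole_angular_factor_real_q :
    Filter.Tendsto
      (fun w : ℝ => (2 * Real.cosh w ^ 2 + 1) / Real.sinh w ^ 2
        - 3 * Real.cosh w / (w * Real.sinh w))
      (nhdsWithin 0 (Set.Ioi 0)) (nhds 0) ∧
    (∀ w : ℝ, 0 < w →
      0 < (2 * Real.cosh w ^ 2 + 1) / Real.sinh w ^ 2
        - 3 * Real.cosh w / (w * Real.sinh w)) ∧
    StrictMonoOn
      (fun w : ℝ => (2 * Real.cosh w ^ 2 + 1) / Real.sinh w ^ 2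
        - 3 * Real.cosh w / (w * Real.sinh w))
      (Set.Ioi 0) := by
  have hmono : StrictMonoOn
      (fun w : ℝ => (2 * Real.cosh w ^ 2 + 1) / Real.sinh w ^ 2
        - 3 * Real.cosh w / (w * Real.sinh w)) (Set.Ioi 0) := by
    apply strictMonoOn_of_deriv_pos (convex_Ioi 0)
    · intro w hw
      exact ((f_hasDeriv w hw).differentiableAt.continuousAt).continuousWithinAt
    · intro w hw
      rw [interior_Ioi] at hw
      rw [(f_hasDeriv w hw).deriv]
      have hg := g0_pos w hw
      have hsp : 0 < Real.sinh w := Real.sinh_pos_iff.mpr hw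
      exact div_pos (by linarith) (mul_pos (pow_pos hw 2) (pow_pos hsp 3))
  have hlower : ∀ w : ℝ, 0 < w →
      0 ≤ (2 * Real.cosh w ^ 2 + 1) / Real.sinh w ^ 2 - 3 * Real.cosh w / (w * Real.sinh w) := by
    intro w hw
    rw [f_eq w hw]
    have hsp : 0 < Real.sinh w := Real.sinh_pos_iff.mpr hw
    exact div_nonneg (h_nonneg w hw.le) (by positivity)
  have hlim : Filter.Tendsto
      (fun w : ℝ => (2 * Real.cosh w ^ 2 + 1) / Real.sinh w ^ 2
        - 3 * Real.cosh w / (w * Real.sinh w))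
      (nhdsWithin 0 (Set.Ioi 0)) (nhds 0) := by
    have hmem : Set.Ioo (0:ℝ) 1 ∈ nhdsWithin 0 (Set.Ioi 0) :=
      Ioo_mem_nhdsGT_of_mem ⟨le_refl 0, one_pos⟩
    have hupT : Filter.Tendsto (fun w : ℝ => 2 * w ^ 2) (nhdsWithin 0 (Set.Ioi 0)) (nhds 0) := by
      have hcont : Continuous fun w : ℝ => 2 * w ^ 2 := by continuity
      have := hcont.tendsto 0
      norm_num at this
      exact this.mono_left nhdsWithin_le_nhds
    apply tendsto_of_tendsto_of_tendsto_of_le_of_le' tendsto_const_nhds hupT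
    · exact Filter.eventually_of_mem hmem fun w hw => hlower w hw.1
    · apply Filter.eventually_of_mem hmem
      intro w hw
      have hw0 := hw.1
      have hsp : 0 < Real.sinh w := Real.sinh_pos_iff.mpr hw0
      have hB : w ≤ Real.sinh w := Real.self_le_sinh_iff.mpr hw0.le
      show (2 * Real.cosh w ^ 2 + 1) / Real.sinh w ^ 2 - 3 * Real.cosh w / (w * Real.sinh w)
        ≤ 2 * w ^ 2
      rw [f_eq w hw0]
      have h1 := h_le w ⟨hw0.le, hw.2.le⟩
      have h2 : w * w ^ 2 ≤ w * Real.sinh w ^ 2 := by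
        nlinarith [mul_le_mul_of_nonneg_left (mul_self_le_mul_self hw0.le hB) hw0.le]
      calc (w * (2 * Real.cosh w ^ 2 + 1) - 3 * Real.cosh w * Real.sinh w) / (w * Real.sinh w ^ 2)
          ≤ (2 * w ^ 5) / (w * w ^ 2) := by
            apply div_le_div₀ (by positivity) h1 (mul_pos hw0 (pow_pos hw0 2)) h2
        _ = 2 * w ^ 2 := by field_simp
  refine ⟨hlim, fun w hw => ?_, hmono⟩
  have h2 : (0:ℝ) < w / 2 := by linarith
  calc (0:ℝ) ≤ (2 * Real.cosh (w/2) ^ 2 + 1) / Real.sinh (w/2) ^ 2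
        - 3 * Real.cosh (w/2) / ((w/2) * Real.sinh (w/2)) := hlower _ h2
    _ < (2 * Real.cosh w ^ 2 + 1) / Real.sinh w ^ 2 - 3 * Real.cosh w / (w * Real.sinh w) :=
        hmono (Set.mem_Ioi.mpr h2) (Set.mem_Ioi.mpr hw) (by linarith)
end

section
/- Define g : (0, π) → ℝ by g(w) = −(2 cos²(w) + 1)/sin²(w) + 3 cos(w)/(w sin(w)). Then g(w) → 0 as w → 0⁺, g(w) < 0 for every w ∈ (0, π), and g is strictly decreasing on (0, π). -/
open Real Filter

lemma aux_sin_ge {x : ℝ} (hx : 0 ≤ x) : x - x ^ 3 / 6 ≤ Real.sin x := by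
  have key : ∀ y : ℝ, HasDerivAt (fun y => Real.sin y - y + y ^ 3 / 6)
      (Real.cos y - 1 + y ^ 2 / 2) y := by
    intro y
    have h1 := (Real.hasDerivAt_sin y).sub (hasDerivAt_id y)
    have h2 := (hasDerivAt_pow 3 y).div_const 6
    have := h1.add h2
    refine this.congr_deriv ?_
    push_cast
    ring
  have mono : MonotoneOn (fun y => Real.sin y - y + y ^ 3 / 6) (Set.Ici 0) := by
    apply monotoneOn_of_deriv_nonneg (convex_Ici 0)
    · exact (Continuous.continuousOn (by continuity))
    · intro y _
      exact (key y).differentiableAt.differentiableWithinAt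
    · intro y _
      rw [(key y).deriv]
      nlinarith [Real.one_sub_sq_div_two_le_cos (x := y)]
  have := mono (Set.self_mem_Ici) hx hx
  simp at this
  linarith

lemma aux_tan_ge {x : ℝ} (hx : 0 ≤ x) (hx2 : x < π / 2) :
    x + x ^ 3 / 3 ≤ Real.tan x := by
  have key : ∀ y ∈ Set.Ioo 0 (π / 2), HasDerivAt (fun y => Real.tan y - y - y ^ 3 / 3)
      (1 / Real.cos y ^ 2 - 1 - y ^ 2) y := by
    intro y hy
    have hc : Real.cos y ≠ 0 := by
      have := Real.cos_pos_of_mem_Ioo ⟨by linarith [hy.1, Real.pi_pos], hy.2⟩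
      linarith
    have h1 := (Real.hasDerivAt_tan hc).sub (hasDerivAt_id y)
    have h2 := (hasDerivAt_pow 3 y).div_const 3
    have := h1.sub h2
    refine this.congr_deriv ?_
    push_cast
    ring
  have mono : MonotoneOn (fun y => Real.tan y - y - y ^ 3 / 3) (Set.Ico 0 (π / 2)) := by
    apply monotoneOn_of_deriv_nonneg (convex_Ico 0 (π / 2))
    · apply ContinuousOn.sub
      apply ContinuousOn.sub
      · apply Real.continuousOn_tan.mono
        intro y hy
        simp only [Set.mem_setOf_eq]
        have := Real.cos_pos_of_mem_Ioo ⟨by linarith [hy.1, Real.pi_pos], hy.2⟩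
        exact ne_of_gt this
      · exact continuousOn_id
      · exact (Continuous.continuousOn (by continuity))
    · intro y hy
      rw [interior_Ico] at hy
      exact (key y hy).differentiableAt.differentiableWithinAt
    · intro y hy
      rw [interior_Ico] at hy
      rw [(key y hy).deriv]
      have hc : 0 < Real.cos y := Real.cos_pos_of_mem_Ioo ⟨by linarith [hy.1, Real.pi_pos], hy.2⟩
      have htan : y < Real.tan y := Real.lt_tan hy.1 hy.2
      have : Real.tan y ^ 2 = 1 / Real.cos y ^ 2 - 1 := by
        rw [Real.tan_eq_sin_div_cos, div_pow]
        have hs := Real.sin_sq_add_cos_sq y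
        field_simp
        nlinarith [hs]
      nlinarith [hy.1]
  have h0 : (0:ℝ) ∈ Set.Ico 0 (π/2) := ⟨le_refl 0, by positivity⟩
  have := mono h0 ⟨hx, hx2⟩ hx
  simp at this
  linarith

lemma aux_sin_sub {w : ℝ} (hw : w ∈ Set.Ioo 0 π) : 0 < Real.sin w - w * Real.cos w := by
  have hs : 0 < Real.sin w := Real.sin_pos_of_pos_of_lt_pi hw.1 hw.2
  rcases le_or_gt (Real.cos w) 0 with hc | hc
  · nlinarith [hw.1]
  · have hw2 : w < π / 2 := by
      by_contra h
      push_neg at h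
      have := Real.cos_nonpos_of_pi_div_two_le_of_le h (by linarith [hw.2, Real.pi_pos])
      linarith
    have htan : w < Real.tan w := Real.lt_tan hw.1 hw2
    rw [Real.tan_eq_sin_div_cos, lt_div_iff₀ hc] at htan
    linarith

lemma aux_f_pos {w : ℝ} (hw : w ∈ Set.Ioo 0 π) :
    0 < 3 * w - 3 * Real.sin w * Real.cos w - 2 * w * Real.sin w ^ 2 := by
  have key : ∀ y : ℝ, HasDerivAt
      (fun y => 3 * y - 3 * Real.sin y * Real.cos y - 2 * y * Real.sin y ^ 2)
      (4 * Real.sin y * (Real.sin y - y * Real.cos y)) y := by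
    intro y
    have h1 : HasDerivAt (fun y : ℝ => 3 * y) 3 y := by
      simpa using (hasDerivAt_id y).const_mul 3
    have h2 : HasDerivAt (fun y => 3 * Real.sin y * Real.cos y)
        (3 * ((Real.cos y * Real.cos y) + Real.sin y * (-Real.sin y))) y := by
      have := ((Real.hasDerivAt_sin y).mul (Real.hasDerivAt_cos y)).const_mul 3
      have e : (fun y => 3 * Real.sin y * Real.cos y) = fun y => 3 * (Real.sin * Real.cos) y := by
        ext y; simp only [Pi.mul_apply]; ring
      rw [e]
      exact this
    have h3 : HasDerivAt (fun y => 2 * (y * Real.sin y ^ 2))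
        (2 * (1 * Real.sin y ^ 2 + y * (2 * Real.sin y ^ 1 * Real.cos y))) y := by
      exact ((hasDerivAt_id y).mul ((Real.hasDerivAt_sin y).pow 2)).const_mul 2
    have := (h1.sub h2).sub h3
    have e : (fun y => 3 * y - 3 * Real.sin y * Real.cos y - 2 * y * Real.sin y ^ 2) = ((fun y : ℝ => 3 * y) - fun y => 3 * Real.sin y * Real.cos y) - fun y => 2 * (y * Real.sin y ^ 2) := by
      ext y; simp only [Pi.sub_apply]; ring
    rw [e]
    refine this.congr_deriv ?_
    · have := Real.sin_sq_add_cos_sq y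
      nlinarith [this]
  have mono : StrictMonoOn
      (fun y => 3 * y - 3 * Real.sin y * Real.cos y - 2 * y * Real.sin y ^ 2)
      (Set.Icc 0 π) := by
    apply strictMonoOn_of_deriv_pos (convex_Icc 0 π)
    · exact Continuous.continuousOn (by continuity)
    · intro y hy
      rw [interior_Icc] at hy
      rw [(key y).deriv]
      have hs : 0 < Real.sin y := Real.sin_pos_of_pos_of_lt_pi hy.1 hy.2
      have := aux_sin_sub hy
      positivity
  have := mono ⟨le_refl 0, Real.pi_pos.le⟩ ⟨hw.1.le, hw.2.le⟩ hw.1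
  simpa using this

lemma aux_B_pos {w : ℝ} (hw : w ∈ Set.Ioo 0 π) :
    0 < w * Real.sin w - 2 * w ^ 2 * Real.cos w + Real.sin w ^ 2 * Real.cos w := by
  have hs : 0 < Real.sin w := Real.sin_pos_of_pos_of_lt_pi hw.1 hw.2
  have hsltw : Real.sin w < w := Real.sin_lt hw.1
  rcases le_or_gt (Real.cos w) 0 with hc | hc
  · have h1 : Real.sin w ^ 2 < 2 * w ^ 2 := by nlinarith
    nlinarith [mul_nonneg (neg_nonneg.2 hc) (by nlinarith : (0:ℝ) ≤ 2 * w ^ 2 - Real.sin w ^ 2),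
      mul_pos hw.1 hs]
  · have hw2 : w < π / 2 := by
      by_contra h
      push_neg at h
      have := Real.cos_nonpos_of_pi_div_two_le_of_le h (by linarith [hw.2, Real.pi_pos])
      linarith
    have htan : w + w ^ 3 / 3 ≤ Real.tan w := aux_tan_ge hw.1.le hw2
    rw [Real.tan_eq_sin_div_cos, le_div_iff₀ hc] at htan
    have hsin : w - w ^ 3 / 6 ≤ Real.sin w := aux_sin_ge hw.1.le
    have hwsmall : w ^ 2 < 3 := by
      nlinarith [Real.pi_lt_d2, hw.1]
    have hnn : 0 ≤ w - w ^ 3 / 6 := by nlinarith [hw.1]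
    have hsq : (w - w ^ 3 / 6) ^ 2 ≤ Real.sin w ^ 2 := by nlinarith
    nlinarith [mul_le_mul_of_nonneg_left htan hw.1.le,
      mul_le_mul_of_nonneg_right hsq hc.le,
      mul_pos (mul_pos hc (pow_pos hw.1 6)) (by norm_num : (0:ℝ) < 1/36)]

lemma aux_phi_hasDeriv {w : ℝ} (hw : w ∈ Set.Ioo 0 π) :
    HasDerivAt (fun y => (y - Real.sin y * Real.cos y) / (y * Real.sin y ^ 2))
      ((( 1 - (Real.cos w * Real.cos w + Real.sin w * (-Real.sin w))) * (w * Real.sin w ^ 2)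
        - (w - Real.sin w * Real.cos w) * (1 * Real.sin w ^ 2 + w * (2 * Real.sin w ^ 1 * Real.cos w)))
        / (w * Real.sin w ^ 2) ^ 2) w := by
  have hs : 0 < Real.sin w := Real.sin_pos_of_pos_of_lt_pi hw.1 hw.2
  have hv : w * Real.sin w ^ 2 ≠ 0 := (mul_pos hw.1 (pow_pos hs 2)).ne'
  have hu : HasDerivAt (fun y => y - Real.sin y * Real.cos y)
      (1 - (Real.cos w * Real.cos w + Real.sin w * (-Real.sin w))) w :=
    (hasDerivAt_id w).sub ((Real.hasDerivAt_sin w).mul (Real.hasDerivAt_cos w))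
  have hvd : HasDerivAt (fun y => y * Real.sin y ^ 2)
      (1 * Real.sin w ^ 2 + w * (2 * Real.sin w ^ 1 * Real.cos w)) w :=
    (hasDerivAt_id w).mul ((Real.hasDerivAt_sin w).pow 2)
  exact hu.div hvd hv

lemma aux_phi_mono : StrictMonoOn
    (fun y => (y - Real.sin y * Real.cos y) / (y * Real.sin y ^ 2)) (Set.Ioo 0 π) := by
  apply strictMonoOn_of_deriv_pos (convex_Ioo 0 π)
  · apply ContinuousOn.div
    · exact Continuous.continuousOn (by continuity)
    · exact Continuous.continuousOn (by continuity)
    · intro y hy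
      have hs : 0 < Real.sin y := Real.sin_pos_of_pos_of_lt_pi hy.1 hy.2
      exact (mul_pos hy.1 (pow_pos hs 2)).ne'
  · intro y hy
    rw [interior_Ioo] at hy
    rw [(aux_phi_hasDeriv hy).deriv]
    have hs : 0 < Real.sin y := Real.sin_pos_of_pos_of_lt_pi hy.1 hy.2
    have hB := aux_B_pos hy
    have hnum : (1 - (Real.cos y * Real.cos y + Real.sin y * (-Real.sin y))) * (y * Real.sin y ^ 2)
        - (y - Real.sin y * Real.cos y) * (1 * Real.sin y ^ 2 + y * (2 * Real.sin y ^ 1 * Real.cos y))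
        = Real.sin y * (y * Real.sin y - 2 * y ^ 2 * Real.cos y + Real.sin y ^ 2 * Real.cos y) := by
      have h := Real.sin_sq_add_cos_sq y
      linear_combination (y * Real.sin y ^ 2) * h
    rw [hnum]
    have hd : 0 < (y * Real.sin y ^ 2) ^ 2 := by
      have : 0 < y * Real.sin y ^ 2 := mul_pos hy.1 (pow_pos hs 2)
      positivity
    exact div_pos (mul_pos hs hB) hd

lemma aux_id {w : ℝ} (hw0 : w ≠ 0) (hs : Real.sin w ≠ 0) :
    -(2 * Real.cos w ^ 2 + 1) / Real.sin w ^ 2 + 3 * Real.cos w / (w * Real.sin w)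
      = 2 - 3 * ((w - Real.sin w * Real.cos w) / (w * Real.sin w ^ 2)) := by
  have h := Real.sin_sq_add_cos_sq w
  field_simp
  linear_combination (-2 * w) * h

lemma aux_neg {w : ℝ} (hw : w ∈ Set.Ioo 0 π) :
    -(2 * Real.cos w ^ 2 + 1) / Real.sin w ^ 2
      + 3 * Real.cos w / (w * Real.sin w) < 0 := by
  have hs : 0 < Real.sin w := Real.sin_pos_of_pos_of_lt_pi hw.1 hw.2
  rw [aux_id hw.1.ne' hs.ne']
  have hf := aux_f_pos hw
  have hden : 0 < w * Real.sin w ^ 2 := mul_pos hw.1 (pow_pos hs 2)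
  have hphi : 2 / 3 < (w - Real.sin w * Real.cos w) / (w * Real.sin w ^ 2) := by
    rw [lt_div_iff₀ hden]
    nlinarith
  linarith

lemma aux_lb {w : ℝ} (hw : w ∈ Set.Ioo (0:ℝ) 1) :
    -w ^ 2 ≤ -(2 * Real.cos w ^ 2 + 1) / Real.sin w ^ 2
      + 3 * Real.cos w / (w * Real.sin w) := by
  have hpi : w < π := lt_trans hw.2 (by linarith [Real.pi_gt_three])
  have hs : 0 < Real.sin w := Real.sin_pos_of_pos_of_lt_pi hw.1 hpi
  rw [aux_id hw.1.ne' hs.ne']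
  have hden : 0 < w * Real.sin w ^ 2 := mul_pos hw.1 (pow_pos hs 2)
  have h1 : 3 * w - 3 * Real.sin w * Real.cos w ≤ 2 * w ^ 3 := by
    have h2w := aux_sin_ge (show (0:ℝ) ≤ 2 * w by linarith [hw.1])
    rw [Real.sin_two_mul] at h2w
    nlinarith
  have hsin := aux_sin_ge hw.1.le
  have hw2 : w ^ 2 < 1 := by nlinarith [hw.1, hw.2]
  have hw3 : w ^ 3 ≤ w := by nlinarith [hw.1]
  have hnn : 0 ≤ w - w ^ 3 / 6 := by linarith [hw.1]
  have hsq : (w - w ^ 3 / 6) ^ 2 ≤ Real.sin w ^ 2 := by nlinarith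
  have h2 : 2 * w ^ 3 ≤ (2 + w ^ 2) * (w * Real.sin w ^ 2) := by
    have hkey := mul_le_mul_of_nonneg_left hsq
      (mul_nonneg (by nlinarith : (0:ℝ) ≤ 2 + w ^ 2) hw.1.le)
    have e : 0 ≤ w ^ 5 * (1 / 3 - 5 / 18 * w ^ 2 + w ^ 4 / 36) :=
      mul_nonneg (pow_nonneg hw.1.le 5) (by nlinarith [hw2, sq_nonneg (w ^ 2)])
    nlinarith [hkey, e]
  have hphi : (w - Real.sin w * Real.cos w) / (w * Real.sin w ^ 2) ≤ (2 + w ^ 2) / 3 := by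
    rw [div_le_div_iff₀ hden (by norm_num : (0:ℝ) < 3)]
    linarith
  linarith

theorem quadrupole_angular_factor_complex_q :
    Filter.Tendsto
      (fun w : ℝ => -(2 * Real.cos w ^ 2 + 1) / Real.sin w ^ 2
        + 3 * Real.cos w / (w * Real.sin w))
      (nhdsWithin 0 (Set.Ioi 0)) (nhds 0) ∧
    (∀ w : ℝ, w ∈ Set.Ioo 0 Real.pi →
      -(2 * Real.cos w ^ 2 + 1) / Real.sin w ^ 2
        + 3 * Real.cos w / (w * Real.sin w) < 0) ∧
    StrictAntiOn
      (fun w : ℝ => -(2 * Real.cos w ^ 2 + 1) / Real.sin w ^ 2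
        + 3 * Real.cos w / (w * Real.sin w))
      (Set.Ioo 0 Real.pi) := by
  refine ⟨?_, fun w hw => aux_neg hw, ?_⟩
  · have hg : Filter.Tendsto (fun w : ℝ => -w ^ 2) (nhdsWithin 0 (Set.Ioi 0)) (nhds 0) := by
      have : Filter.Tendsto (fun w : ℝ => -w ^ 2) (nhds 0) (nhds (-(0:ℝ) ^ 2)) :=
        ((continuous_pow 2).neg).tendsto 0
      simpa using this.mono_left nhdsWithin_le_nhds
    have hh : Filter.Tendsto (fun _ : ℝ => (0:ℝ)) (nhdsWithin 0 (Set.Ioi 0)) (nhds 0) :=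
      tendsto_const_nhds
    apply tendsto_of_tendsto_of_tendsto_of_le_of_le' hg hh
    · filter_upwards [Ioo_mem_nhdsGT_of_mem (Set.mem_Ico.mpr ⟨le_refl (0:ℝ), one_pos⟩)]
        with w hw
      exact aux_lb hw
    · filter_upwards [Ioo_mem_nhdsGT_of_mem (Set.mem_Ico.mpr ⟨le_refl (0:ℝ), one_pos⟩)]
        with w hw
      have hpi : w < π := lt_trans hw.2 (by linarith [Real.pi_gt_three])
      exact (aux_neg ⟨hw.1, hpi⟩).le
  · intro a ha b hb hab
    have hsa : 0 < Real.sin a := Real.sin_pos_of_pos_of_lt_pi ha.1 ha.2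
    have hsb : 0 < Real.sin b := Real.sin_pos_of_pos_of_lt_pi hb.1 hb.2
    simp only
    rw [aux_id ha.1.ne' hsa.ne', aux_id hb.1.ne' hsb.ne']
    have := aux_phi_mono ha hb hab
    simp only at this
    linarith
end

section
/- Let w > 0 and let n be a nonnegative integer. Define the deformed quadrupole moments Q₊(w) = (2n + 1 + 1/(2 cosh(w/2))) · f(w) and Q₋(w) = (2n + 1 − 1/(2 cosh(w/2))) · f(w), where f(w) = (2 cosh²(w) + 1)/sinh²(w) − 3 cosh(w)/(w sinh(w)). Then Q₊(w) > 0 and Q₋(w) > 0 for all w > 0, and both Q₊ and Q₋ are strictly increasing functions of w on (0, ∞). -/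
open Real

/-- The deformed angular matrix element of the quadrupole operator for `q = e^w ∈ ℝ⁺`. -/
noncomputable def angularFactorRealQ (w : ℝ) : ℝ :=
  (2 * Real.cosh w ^ 2 + 1) / Real.sinh w ^ 2 - 3 * Real.cosh w / (w * Real.sinh w)

/-- Quadrupole moment `Q₊` in the state `|n 0 0⟩_q` for `q = e^w`, root `α₀₊`. -/
noncomputable def Qplus (n : ℕ) (w : ℝ) : ℝ :=
  (2 * (n : ℝ) + 1 + 1 / (2 * Real.cosh (w/2))) * angularFactorRealQ w

/-- Quadrupole moment `Q₋` in the state `|n 0 0⟩_q` for `q = e^w`, root `α₀₋`. -/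
noncomputable def Qminus (n : ℕ) (w : ℝ) : ℝ :=
  (2 * (n : ℝ) + 1 - 1 / (2 * Real.cosh (w/2))) * angularFactorRealQ w

private lemma pos_of_deriv (g g' : ℝ → ℝ) (h0 : g 0 = 0)
    (hd : ∀ x, HasDerivAt g (g' x) x)
    (hp : ∀ x, 0 < x → 0 < g' x) : ∀ x, 0 < x → 0 < g x := by
  intro x hx
  have mono : StrictMonoOn g (Set.Ici 0) :=
    strictMonoOn_of_deriv_pos (convex_Ici 0)
      (fun y _ => (hd y).continuousAt.continuousWithinAt)
      (by intro y hy
          rw [interior_Ici] at hy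
          rw [(hd y).deriv]
          exact hp y hy)
  have := mono Set.self_mem_Ici (Set.mem_Ici.mpr hx.le) hx
  rwa [h0] at this

private lemma s1 : ∀ x : ℝ, 0 < x → 0 < Real.sinh x - x := by
  intro x hx
  have := Real.self_lt_sinh_iff.mpr hx
  linarith

private lemma l1 : ∀ x : ℝ, 0 < x → 0 < x * Real.cosh x - Real.sinh x := by
  refine pos_of_deriv _ (fun x => x * Real.sinh x) (by simp) (fun x => ?_) ?_
  · have h := ((hasDerivAt_id' x).mul (Real.hasDerivAt_cosh x)).sub (Real.hasDerivAt_sinh x)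
    refine h.congr_deriv (Eq.symm ?_); ring
  · intro x hx; exact mul_pos hx (Real.sinh_pos_iff.mpr hx)

private lemma c2 : ∀ x : ℝ, 0 < x → 0 < Real.cosh x - (1 + x^2/2) := by
  refine pos_of_deriv _ (fun x => Real.sinh x - x) (by simp) (fun x => ?_) s1
  have h := (Real.hasDerivAt_cosh x).sub (((hasDerivAt_pow 2 x).div_const 2).const_add 1)
  refine h.congr_deriv (Eq.symm ?_); norm_num

private lemma s3 : ∀ x : ℝ, 0 < x → 0 < Real.sinh x - (x + x^3/6) := by
  refine pos_of_deriv _ (fun x => Real.cosh x - (1 + x^2/2)) (by simp) (fun x => ?_) c2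
  have h := (Real.hasDerivAt_sinh x).sub ((hasDerivAt_id' x).add ((hasDerivAt_pow 3 x).div_const 6))
  refine h.congr_deriv (Eq.symm ?_); norm_num; ring

private lemma c4 : ∀ x : ℝ, 0 < x → 0 < Real.cosh x - (1 + x^2/2 + x^4/24) := by
  refine pos_of_deriv _ (fun x => Real.sinh x - (x + x^3/6)) (by simp) (fun x => ?_) s3
  have h := (Real.hasDerivAt_cosh x).sub
    ((((hasDerivAt_pow 2 x).div_const 2).const_add 1).add ((hasDerivAt_pow 4 x).div_const 24))
  refine h.congr_deriv (Eq.symm ?_); norm_num; ring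

private lemma s5 : ∀ x : ℝ, 0 < x → 0 < Real.sinh x - (x + x^3/6 + x^5/120) := by
  refine pos_of_deriv _ (fun x => Real.cosh x - (1 + x^2/2 + x^4/24)) (by simp) (fun x => ?_) c4
  have h := (Real.hasDerivAt_sinh x).sub
    (((hasDerivAt_id' x).add ((hasDerivAt_pow 3 x).div_const 6)).add ((hasDerivAt_pow 5 x).div_const 120))
  refine h.congr_deriv (Eq.symm ?_); norm_num; ring

private lemma v3aux : ∀ x : ℝ, 0 < x → 0 < 1 + x^2*Real.cosh x/2 + x^3*Real.sinh x/6 - Real.cosh x := by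
  refine pos_of_deriv _
    (fun x => (x*Real.cosh x - Real.sinh x) + x^2*Real.sinh x + x^3*Real.cosh x/6) (by simp)
    (fun x => ?_) ?_
  · have h := ((((hasDerivAt_pow 2 x).mul (Real.hasDerivAt_cosh x)).div_const 2).const_add 1 |>.add
      (((hasDerivAt_pow 3 x).mul (Real.hasDerivAt_sinh x)).div_const 6)).sub (Real.hasDerivAt_cosh x)
    refine h.congr_deriv (Eq.symm ?_); norm_num; ring
  · intro x hx
    have h1 := l1 x hx
    have h2 : 0 < x^2*Real.sinh x := mul_pos (pow_pos hx 2) (Real.sinh_pos_iff.mpr hx)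
    have h3 : 0 < x^3*Real.cosh x/6 := by positivity
    linarith

private lemma v3 : ∀ x : ℝ, 0 < x → 0 < x + x^3*Real.cosh x/6 - Real.sinh x := by
  refine pos_of_deriv _
    (fun x => 1 + x^2*Real.cosh x/2 + x^3*Real.sinh x/6 - Real.cosh x) (by simp)
    (fun x => ?_) v3aux
  have h := (((hasDerivAt_id' x).add (((hasDerivAt_pow 3 x).mul (Real.hasDerivAt_cosh x)).div_const 6))).sub
    (Real.hasDerivAt_sinh x)
  refine h.congr_deriv (Eq.symm ?_); norm_num; ring

private lemma v4 : ∀ x : ℝ, 0 < x → 0 < 1 + x^2/2 + x^4*Real.cosh x/24 - Real.cosh x := by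
  refine pos_of_deriv _
    (fun x => (x + x^3*Real.cosh x/6 - Real.sinh x) + x^4*Real.sinh x/24) (by simp)
    (fun x => ?_) ?_
  · have h := ((((hasDerivAt_pow 2 x).div_const 2).const_add 1).add
      (((hasDerivAt_pow 4 x).mul (Real.hasDerivAt_cosh x)).div_const 24)).sub (Real.hasDerivAt_cosh x)
    refine h.congr_deriv (Eq.symm ?_); norm_num; ring
  · intro x hx
    have h1 := v3 x hx
    have h2 : 0 ≤ x^4*Real.sinh x/24 := by
      have := (Real.sinh_pos_iff.mpr hx).le; positivity
    linarith

private lemma v5 : ∀ x : ℝ, 0 < x → 0 < x + x^3/6 + x^5*Real.cosh x/120 - Real.sinh x := by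
  refine pos_of_deriv _
    (fun x => (1 + x^2/2 + x^4*Real.cosh x/24 - Real.cosh x) + x^5*Real.sinh x/120) (by simp)
    (fun x => ?_) ?_
  · have h := (((hasDerivAt_id' x).add ((hasDerivAt_pow 3 x).div_const 6)).add
      (((hasDerivAt_pow 5 x).mul (Real.hasDerivAt_cosh x)).div_const 120)).sub (Real.hasDerivAt_sinh x)
    refine h.congr_deriv (Eq.symm ?_); norm_num; ring
  · intro x hx
    have h1 := v4 x hx
    have h2 : 0 ≤ x^5*Real.sinh x/120 := by
      have := (Real.sinh_pos_iff.mpr hx).le; positivity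
    linarith

set_option maxHeartbeats 2000000 in
private lemma Ppos (u : ℝ) (hu : 0 < u) (hub : u ≤ 3/2) :
    0 < (24*(u+u^3/6+u^5/120)^6 + 36*(u+u^3/6+u^5/120)^4 + 12*(u+u^3/6+u^5/120)^2
        - 48*u^2*(u+u^3/6+u^5/120)^2 - 24*u^2)
      + 12*u*(u+u^3/6+u^5/120)*(1+u^2/2+u^4/24)
      - 16*u^2*(u+u^3/6+(9/400)*u^5)^4*(1+u^2/2+(9/80)*u^4) := by
  have h2 : u^2 ≤ 9/4 := by nlinarith
  have e0 : (0:ℝ) ≤ u^6 := by positivity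
  have e1 : 0 ≤ (9/4 - u^2)*u^6 := by nlinarith [pow_pos hu 6]
  have e2 : 0 ≤ (9/4 - u^2)*u^8 := by nlinarith [pow_pos hu 8]
  have e3 : 0 ≤ (9/4 - u^2)*u^10 := by nlinarith [pow_pos hu 10]
  have e4 : 0 ≤ (9/4 - u^2)*u^12 := by nlinarith [pow_pos hu 12]
  have e5 : 0 ≤ (9/4 - u^2)*u^14 := by nlinarith [pow_pos hu 14]
  have e6 : 0 ≤ (9/4 - u^2)*u^16 := by nlinarith [pow_pos hu 16]
  have e7 : 0 ≤ (9/4 - u^2)*u^18 := by nlinarith [pow_pos hu 18]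
  have e8 : 0 ≤ (9/4 - u^2)*u^20 := by nlinarith [pow_pos hu 20]
  have e9 : 0 ≤ (9/4 - u^2)*u^22 := by nlinarith [pow_pos hu 22]
  have e10 : 0 ≤ (9/4 - u^2)*u^24 := by nlinarith [pow_pos hu 24]
  have e11 : 0 ≤ (9/4 - u^2)*u^26 := by nlinarith [pow_pos hu 26]
  have e12 : 0 ≤ (9/4 - u^2)*u^28 := by nlinarith [pow_pos hu 28]
  have q8 : (0:ℝ) ≤ u^8 := by positivity
  have q10 : (0:ℝ) ≤ u^10 := by positivity
  have q12 : (0:ℝ) ≤ u^12 := by positivity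
  have q14 : (0:ℝ) ≤ u^14 := by positivity
  have q16 : (0:ℝ) ≤ u^16 := by positivity
  have q18 : (0:ℝ) ≤ u^18 := by positivity
  have q20 : (0:ℝ) ≤ u^20 := by positivity
  have q22 : (0:ℝ) ≤ u^22 := by positivity
  have q24 : (0:ℝ) ≤ u^24 := by positivity
  have q26 : (0:ℝ) ≤ u^26 := by positivity
  have q28 : (0:ℝ) ≤ u^28 := by positivity
  have q30 : (0:ℝ) ≤ u^30 := by positivity
  have p6 : 0 < u^6 := pow_pos hu 6
  linarith [e1,e2,e3,e4,e5,e6,e7,e8,e9,e10,e11,e12,p6,q8,q10,q12,q14,q16,q18,q20,q22,q24,q26,q28,q30]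

set_option maxHeartbeats 1000000 in
private lemma branch2core (u σ : ℝ) (hu : 3/2 ≤ u) (hcb : u + u^3/6 ≤ σ) :
    0 < 24*σ^6 + 36*σ^4 + 12*σ^2 - 48*u^2*σ^2 - 24*u^2
      + 12*u*σ^2 - 8*u^2*σ^3*(2*σ^2+1) := by
  have hu0 : (0:ℝ) < u := by linarith
  have hσ2 : 2 ≤ σ := by nlinarith [pow_le_pow_left₀ (by norm_num : (0:ℝ) ≤ 3/2) hu 3]
  have hu2 : u^2 ≤ 3*σ/2 := by nlinarith [mul_nonneg hu0.le (sq_nonneg (u-2))]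
  have huσ : u ≤ σ := by nlinarith
  nlinarith [mul_nonneg (sub_nonneg.2 hu2) (pow_pos (lt_of_lt_of_le two_pos hσ2) 4).le,
    mul_nonneg (sub_nonneg.2 hu2) (sq_nonneg σ),
    mul_nonneg (sub_nonneg.2 hσ2) (pow_pos (lt_of_lt_of_le two_pos hσ2) 4).le,
    mul_nonneg (sub_nonneg.2 hσ2) (pow_pos (lt_of_lt_of_le two_pos hσ2) 3).le,
    mul_pos hu0 (pow_pos (lt_of_lt_of_le two_pos hσ2) 2),
    sq_nonneg (σ - u), pow_pos (lt_of_lt_of_le two_pos hσ2) 6]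

set_option maxHeartbeats 2000000 in
private lemma branch1core (u σ κ : ℝ) (hu : 0 < u) (hub : u ≤ 3/2)
    (hk1 : 1 ≤ κ)
    (hsl : u + u^3/6 + u^5/120 ≤ σ)
    (hsu : σ ≤ u + u^3/6 + u^5*κ/120)
    (hkl : 1 + u^2/2 + u^4/24 ≤ κ)
    (hku : κ ≤ 1 + u^2/2 + u^4*κ/24)
    (hP : 0 < (24*(u+u^3/6+u^5/120)^6 + 36*(u+u^3/6+u^5/120)^4 + 12*(u+u^3/6+u^5/120)^2
        - 48*u^2*(u+u^3/6+u^5/120)^2 - 24*u^2)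
      + 12*u*(u+u^3/6+u^5/120)*(1+u^2/2+u^4/24)
      - 16*u^2*(u+u^3/6+(9/400)*u^5)^4*(1+u^2/2+(9/80)*u^4)) :
    0 < 24*σ^6 + 36*σ^4 + 12*σ^2 - 48*u^2*σ^2 - 24*u^2 + 12*u*σ*κ - 16*u^2*σ^4*κ := by
  have hσ0 : 0 < σ := lt_of_lt_of_le (by positivity) hsl
  have hu2' : u^2 ≤ 9/4 := by nlinarith
  have hu4 : u^4 ≤ 81/16 := by nlinarith [mul_nonneg (sub_nonneg.2 hu2') (sq_nonneg u)]
  have hκ : κ ≤ 27/10 := by nlinarith [mul_nonneg (sub_nonneg.2 hu4) (by linarith : (0:ℝ) ≤ κ)]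
  have hsu2 : σ ≤ u+u^3/6+(9/400)*u^5 := by
    nlinarith [mul_nonneg (pow_pos hu 5).le (sub_nonneg.2 hκ)]
  have hku2 : κ ≤ 1+u^2/2+(9/80)*u^4 := by
    nlinarith [mul_nonneg (pow_pos hu 4).le (sub_nonneg.2 hκ)]
  have hσl : 0 ≤ σ - (u+u^3/6+u^5/120) := sub_nonneg.2 hsl
  have hσs : 0 ≤ σ + (u+u^3/6+u^5/120) := by positivity
  have hAfac : 0 ≤ (σ^2 - (u+u^3/6+u^5/120)^2) := by nlinarith [mul_nonneg hσl hσs]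
  have hbr : 0 ≤ 24*(σ^4+σ^2*(u+u^3/6+u^5/120)^2+(u+u^3/6+u^5/120)^4)
      + 36*(σ^2+(u+u^3/6+u^5/120)^2) + 12 - 48*u^2 := by
    nlinarith [sq_nonneg σ, sq_nonneg (u+u^3/6+u^5/120), pow_pos hu 2,
      mul_nonneg hσl hσs, sq_nonneg (σ*(u+u^3/6+u^5/120)), pow_pos hσ0 4]
  have hA : (24*(u+u^3/6+u^5/120)^6 + 36*(u+u^3/6+u^5/120)^4 + 12*(u+u^3/6+u^5/120)^2
        - 48*u^2*(u+u^3/6+u^5/120)^2 - 24*u^2)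
      ≤ 24*σ^6 + 36*σ^4 + 12*σ^2 - 48*u^2*σ^2 - 24*u^2 := by
    nlinarith [mul_nonneg hAfac hbr]
  have hBp : 12*u*(u+u^3/6+u^5/120)*(1+u^2/2+u^4/24) ≤ 12*u*σ*κ := by
    have h1 : (u+u^3/6+u^5/120)*(1+u^2/2+u^4/24) ≤ σ*κ := by
      have := mul_le_mul hsl hkl (by positivity) hσ0.le
      linarith
    nlinarith [h1, hu.le]
  have hBm : 16*u^2*σ^4*κ ≤ 16*u^2*(u+u^3/6+(9/400)*u^5)^4*(1+u^2/2+(9/80)*u^4) := by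
    have h1 : σ^4 ≤ (u+u^3/6+(9/400)*u^5)^4 := by
      apply pow_le_pow_left₀ hσ0.le hsu2
    have h2 : σ^4*κ ≤ (u+u^3/6+(9/400)*u^5)^4*(1+u^2/2+(9/80)*u^4) := by
      have := mul_le_mul h1 hku2 (by linarith) (by positivity)
      linarith
    nlinarith [h2, sq_nonneg u]
  linarith

private lemma Dpos (u : ℝ) (hu : 0 < u) :
    0 < 24*(Real.sinh u)^2*(Real.cosh u)^4 - 12*(Real.sinh u)^2*(Real.cosh u)^2
      + 12*u*(Real.sinh u)*(Real.cosh u) - 48*u^2*(Real.cosh u)^2 + 24*u^2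
      - 16*u^2*(Real.sinh u)^4*(Real.cosh u) := by
  have hk2 : (Real.cosh u)^2 = (Real.sinh u)^2 + 1 := Real.cosh_sq u
  have hk1 : 1 ≤ Real.cosh u := Real.one_le_cosh u
  have hσ0 : 0 < Real.sinh u := Real.sinh_pos_iff.mpr hu
  set σ := Real.sinh u with hσdef
  set κ := Real.cosh u with hκdef
  have hEq : 24*σ^2*κ^4 - 12*σ^2*κ^2 + 12*u*σ*κ - 48*u^2*κ^2 + 24*u^2 - 16*u^2*σ^4*κ
      = (24*σ^6 + 36*σ^4 + 12*σ^2 - 48*u^2*σ^2 - 24*u^2) + 12*u*σ*κ - 16*u^2*σ^4*κ := by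
    linear_combination (24*σ^2*(κ^2+σ^2+1) - 12*σ^2 - 48*u^2) * hk2
  rw [hEq]
  rcases le_or_gt u (3/2) with h|h
  · exact branch1core u σ κ hu h hk1 (by have := s5 u hu; linarith)
      (by have := v5 u hu; linarith) (by have := c4 u hu; linarith)
      (by have := v4 u hu; linarith) (Ppos u hu h)
  · have hc := branch2core u σ h.le (by have := s3 u hu; linarith)
    have hκσ : 0 < κ - σ := by nlinarith
    have h2σκ : 0 ≤ 2*σ^2 + 1 - 2*σ*κ := by nlinarith [sq_nonneg (κ - σ)]
    have t1 : 0 ≤ 12*u*σ*(κ - σ) := by positivity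
    have t2 : 0 ≤ 8*u^2*σ^3*(2*σ^2 + 1 - 2*σ*κ) := by positivity
    nlinarith [hc, t1, t2]

private lemma Fpos : ∀ w : ℝ, 0 < w → 0 < w * (2*Real.cosh w^2+1) - 3*(Real.sinh w*Real.cosh w) := by
  refine pos_of_deriv _ (fun w => 4*Real.sinh w*(w*Real.cosh w - Real.sinh w)) (by simp) (fun w => ?_) ?_
  · have h := ((hasDerivAt_id' w).mul ((((Real.hasDerivAt_cosh w).pow 2).const_mul 2).add_const 1)).sub
      (((Real.hasDerivAt_sinh w).mul (Real.hasDerivAt_cosh w)).const_mul 3)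
    refine h.congr_deriv (Eq.symm ?_)
    have hc := Real.cosh_sq w
    push_cast
    simp only [Pi.pow_apply, Pi.mul_apply]
    linear_combination hc
  · intro w hw
    have := l1 w hw
    have hs := Real.sinh_pos_iff.mpr hw
    positivity

private lemma fpos (w : ℝ) (hw : 0 < w) : 0 < angularFactorRealQ w := by
  have hs := Real.sinh_pos_iff.mpr hw
  have heq : angularFactorRealQ w
      = (w * (2*Real.cosh w^2+1) - 3*(Real.sinh w*Real.cosh w))/(w*Real.sinh w^2) := by
    unfold angularFactorRealQ
    field_simp
  rw [heq]
  exact div_pos (Fpos w hw) (by positivity)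

private lemma flt2 (w : ℝ) (hw : 0 < w) : angularFactorRealQ w < 2 := by
  have hs := Real.sinh_pos_iff.mpr hw
  have hc := Real.one_le_cosh w
  have heq : 2 - angularFactorRealQ w
      = 3*(Real.sinh w*Real.cosh w - w)/(w*Real.sinh w^2) := by
    unfold angularFactorRealQ
    field_simp
    linear_combination (-2*w) * Real.cosh_sq w
  have hsw := Real.self_lt_sinh_iff.mpr hw
  have hnum : 0 < Real.sinh w*Real.cosh w - w := by
    nlinarith [mul_nonneg hs.le (sub_nonneg.2 hc)]
  have : 0 < 2 - angularFactorRealQ w := by rw [heq]; positivity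
  linarith

private lemma fder (w : ℝ) (hw : 0 < w) :
    HasDerivAt angularFactorRealQ
      (3*((Real.sinh w)^2*Real.cosh w + w*Real.sinh w - 2*w^2*Real.cosh w)/(w^2*(Real.sinh w)^3)) w := by
  have hs : Real.sinh w ≠ 0 := ne_of_gt (Real.sinh_pos_iff.mpr hw)
  have hw0 : w ≠ 0 := ne_of_gt hw
  have h1 := ((((Real.hasDerivAt_cosh w).pow 2).const_mul 2).add_const 1).div
    ((Real.hasDerivAt_sinh w).pow 2) (pow_ne_zero 2 hs)
  have h2 := ((Real.hasDerivAt_cosh w).const_mul 3).div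
    ((hasDerivAt_id' w).mul (Real.hasDerivAt_sinh w)) (mul_ne_zero hw0 hs)
  have h := h1.sub h2
  refine h.congr_deriv (Eq.symm ?_)
  simp only [Pi.pow_apply, Pi.mul_apply]
  field_simp
  linear_combination (4*Real.sinh w*Real.cosh w*w^2 - 3*Real.sinh w^2*w) * Real.cosh_sq w

private lemma fder_bound (w : ℝ) (hw : 0 < w) :
    Real.sinh (w/2) / (2*Real.cosh (w/2)^2)
      < 3*((Real.sinh w)^2*Real.cosh w + w*Real.sinh w - 2*w^2*Real.cosh w)/(w^2*(Real.sinh w)^3) := by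
  have hu : 0 < w/2 := by linarith
  have hD := Dpos (w/2) hu
  have hσ0 : 0 < Real.sinh (w/2) := Real.sinh_pos_iff.mpr hu
  have hκ0 : 0 < Real.cosh (w/2) := Real.cosh_pos (w/2)
  have hs0 : 0 < Real.sinh w := Real.sinh_pos_iff.mpr hw
  have hsw : Real.sinh w = 2*Real.sinh (w/2)*Real.cosh (w/2) := by
    have h1 : Real.sinh w = Real.sinh (2*(w/2)) := by ring_nf
    rw [h1, Real.sinh_two_mul]
  have hcw : Real.cosh w = 2*Real.cosh (w/2)^2 - 1 := by
    have h1 : Real.cosh w = Real.cosh (2*(w/2)) := by ring_nf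
    rw [h1, Real.cosh_two_mul]
    linear_combination (-1 : ℝ) * Real.cosh_sq (w/2)
  rw [div_lt_div_iff₀ (by positivity) (by positivity)]
  rw [hsw, hcw]
  nlinarith [mul_pos (by positivity : (0:ℝ) < 2*Real.cosh (w/2)^2) hD]

private lemma Rplus_deriv (n : ℕ) (w : ℝ) :
    HasDerivAt (fun w => 2 * (n : ℝ) + 1 + 1 / (2 * Real.cosh (w/2)))
      (-(Real.sinh (w/2)/(4*Real.cosh (w/2)^2))) w := by
  have hκ0 : 0 < Real.cosh (w/2) := Real.cosh_pos (w/2)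
  have hden : (2:ℝ) * Real.cosh (w/2) ≠ 0 := by positivity
  have h := ((hasDerivAt_const w (1:ℝ)).div
    ((((hasDerivAt_id' w).div_const 2).cosh).const_mul 2) hden).const_add (2 * (n : ℝ) + 1)
  refine h.congr_deriv (Eq.symm ?_)
  rw [← neg_div, div_eq_div_iff (by positivity) (by positivity)]
  ring

private lemma Qplus_deriv (n : ℕ) (w : ℝ) (hw : 0 < w) :
    HasDerivAt (Qplus n)
      (-(Real.sinh (w/2)/(4*Real.cosh (w/2)^2)) * angularFactorRealQ w
        + (2 * (n : ℝ) + 1 + 1 / (2 * Real.cosh (w/2)))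
          * (3*((Real.sinh w)^2*Real.cosh w + w*Real.sinh w - 2*w^2*Real.cosh w)/(w^2*(Real.sinh w)^3))) w := by
  exact (Rplus_deriv n w).mul (fder w hw)

private lemma Rminus_deriv (n : ℕ) (w : ℝ) :
    HasDerivAt (fun w => 2 * (n : ℝ) + 1 - 1 / (2 * Real.cosh (w/2)))
      (Real.sinh (w/2)/(4*Real.cosh (w/2)^2)) w := by
  have hκ0 : 0 < Real.cosh (w/2) := Real.cosh_pos (w/2)
  have hden : (2:ℝ) * Real.cosh (w/2) ≠ 0 := by positivity
  have h := (hasDerivAt_const w (2 * (n : ℝ) + 1)).sub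
    ((hasDerivAt_const w (1:ℝ)).div ((((hasDerivAt_id' w).div_const 2).cosh).const_mul 2) hden)
  refine h.congr_deriv (Eq.symm ?_)
  have e : (0:ℝ) - (0 * (2 * Real.cosh (w/2)) - 1 * (2 * (Real.sinh (w/2) * (1/2)))) / (2 * Real.cosh (w/2)) ^ 2
      = Real.sinh (w/2) / ((2 * Real.cosh (w/2)) ^ 2) := by ring
  rw [e, div_eq_div_iff (by positivity) (by positivity)]
  ring

private lemma Qminus_deriv (n : ℕ) (w : ℝ) (hw : 0 < w) :
    HasDerivAt (Qminus n)
      ((Real.sinh (w/2)/(4*Real.cosh (w/2)^2)) * angularFactorRealQ w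
        + (2 * (n : ℝ) + 1 - 1 / (2 * Real.cosh (w/2)))
          * (3*((Real.sinh w)^2*Real.cosh w + w*Real.sinh w - 2*w^2*Real.cosh w)/(w^2*(Real.sinh w)^3))) w := by
  exact (Rminus_deriv n w).mul (fder w hw)

private lemma Rplus_ge (n : ℕ) (w : ℝ) : 1 ≤ 2 * (n : ℝ) + 1 + 1 / (2 * Real.cosh (w/2)) := by
  have hκ0 : 0 < Real.cosh (w/2) := Real.cosh_pos (w/2)
  have hn : (0:ℝ) ≤ (n:ℝ) := Nat.cast_nonneg n
  have : 0 < 1 / (2 * Real.cosh (w/2)) := by positivity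
  linarith

private lemma Rminus_ge (n : ℕ) (w : ℝ) : 1/2 ≤ 2 * (n : ℝ) + 1 - 1 / (2 * Real.cosh (w/2)) := by
  have hκ1 : 1 ≤ Real.cosh (w/2) := Real.one_le_cosh (w/2)
  have h1 : 1 / (2 * Real.cosh (w/2)) ≤ 1/2 := by
    rw [div_le_div_iff₀ (by positivity) (by norm_num)]
    linarith
  have hn : (0:ℝ) ≤ (n:ℝ) := Nat.cast_nonneg n
  linarith

private lemma Qplus_deriv_pos (n : ℕ) (w : ℝ) (hw : 0 < w) :
    0 < -(Real.sinh (w/2)/(4*Real.cosh (w/2)^2)) * angularFactorRealQ w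
        + (2 * (n : ℝ) + 1 + 1 / (2 * Real.cosh (w/2)))
          * (3*((Real.sinh w)^2*Real.cosh w + w*Real.sinh w - 2*w^2*Real.cosh w)/(w^2*(Real.sinh w)^3)) := by
  have hσ0 : 0 < Real.sinh (w/2) := Real.sinh_pos_iff.mpr (by linarith)
  have hκ0 : 0 < Real.cosh (w/2) := Real.cosh_pos (w/2)
  set β := Real.sinh (w/2)/(4*Real.cosh (w/2)^2) with hβdef
  set d := 3*((Real.sinh w)^2*Real.cosh w + w*Real.sinh w - 2*w^2*Real.cosh w)/(w^2*(Real.sinh w)^3) with hddef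
  have hβ : 0 < β := by rw [hβdef]; positivity
  have h2β : Real.sinh (w/2) / (2*Real.cosh (w/2)^2) = 2*β := by rw [hβdef]; ring
  have hd : 2*β < d := by rw [← h2β, hddef]; exact fder_bound w hw
  have hf2 := flt2 w hw
  have hf0 := fpos w hw
  have hR := Rplus_ge n w
  have h1 : β * angularFactorRealQ w < β * 2 := by
    exact mul_lt_mul_of_pos_left hf2 hβ
  have h2 : d ≤ (2 * (n : ℝ) + 1 + 1 / (2 * Real.cosh (w/2))) * d := by
    nlinarith [hd, hβ]
  nlinarith [h1, h2, hd, hβ]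

private lemma Qminus_deriv_pos (n : ℕ) (w : ℝ) (hw : 0 < w) :
    0 < (Real.sinh (w/2)/(4*Real.cosh (w/2)^2)) * angularFactorRealQ w
        + (2 * (n : ℝ) + 1 - 1 / (2 * Real.cosh (w/2)))
          * (3*((Real.sinh w)^2*Real.cosh w + w*Real.sinh w - 2*w^2*Real.cosh w)/(w^2*(Real.sinh w)^3)) := by
  have hσ0 : 0 < Real.sinh (w/2) := Real.sinh_pos_iff.mpr (by linarith)
  have hκ0 : 0 < Real.cosh (w/2) := Real.cosh_pos (w/2)
  have hβ : 0 < Real.sinh (w/2)/(4*Real.cosh (w/2)^2) := by positivity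
  have hd : 0 < 3*((Real.sinh w)^2*Real.cosh w + w*Real.sinh w - 2*w^2*Real.cosh w)/(w^2*(Real.sinh w)^3) := by
    have h := fder_bound w hw
    have : 0 < Real.sinh (w/2) / (2*Real.cosh (w/2)^2) := by positivity
    linarith
  have hf0 := fpos w hw
  have hR := Rminus_ge n w
  nlinarith [mul_pos hβ hf0, mul_pos (lt_of_lt_of_le (by norm_num : (0:ℝ) < 1/2) hR) hd]

theorem quadrupole_moment_real_q (n : ℕ) :
    (∀ w : ℝ, 0 < w → 0 < Qplus n w ∧ 0 < Qminus n w) ∧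
    StrictMonoOn (Qplus n) (Set.Ioi 0) ∧
    StrictMonoOn (Qminus n) (Set.Ioi 0) := by
  refine ⟨fun w hw => ⟨?_, ?_⟩, ?_, ?_⟩
  · exact mul_pos (lt_of_lt_of_le one_pos (Rplus_ge n w)) (fpos w hw)
  · exact mul_pos (lt_of_lt_of_le (by norm_num) (Rminus_ge n w)) (fpos w hw)
  · apply strictMonoOn_of_deriv_pos (convex_Ioi 0)
    · exact fun w hw => (Qplus_deriv n w (Set.mem_Ioi.mp hw)).continuousAt.continuousWithinAt
    · intro w hw
      rw [interior_Ioi] at hw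
      have hw' := Set.mem_Ioi.mp hw
      rw [(Qplus_deriv n w hw').deriv]
      exact Qplus_deriv_pos n w hw'
  · apply strictMonoOn_of_deriv_pos (convex_Ioi 0)
    · exact fun w hw => (Qminus_deriv n w (Set.mem_Ioi.mp hw)).continuousAt.continuousWithinAt
    · intro w hw
      rw [interior_Ioi] at hw
      have hw' := Set.mem_Ioi.mp hw
      rw [(Qminus_deriv n w hw').deriv]
      exact Qminus_deriv_pos n w hw'
end
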